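/- Let H_μ = H₀ + V_μ on ℓ²(ℤ), where (H₀f)(n) = e^{−g}f(n−1) + e^{g}f(n+1) with g > 0 and V_μ is a (ℤ, [−μ,μ]) pseudo-ergodic potential. For 0 ≤ μ < e^g − e^{−g}, the operator H_μ is invertible and ‖H_μ⁻¹‖⁻¹ = e^g − e^{−g} − μ. -/

import Mathlib

noncomputable section

/-- `ℓ²(ℤ)` with complex scalars. -/
abbrev L2Z := lp (fun _ : ℤ => ℂ) 2

/-- A real potential `V : ℤ → ℝ` with values in `[-μ, μ]` is `(ℤ, [-μ, μ])` pseudo-ergodic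
(with respect to the translation action of `ℤ` on itself). -/
def IsPseudoErgodicZ (μ : ℝ) (V : ℤ → ℝ) : Prop :=
  (∀ n, V n ∈ Set.Icc (-μ) μ) ∧
  ∀ ε > (0 : ℝ), ∀ F : Finset ℤ, ∀ W : ℤ → ℝ, (∀ n ∈ F, W n ∈ Set.Icc (-μ) μ) →
    ∃ k : ℤ, ∀ n ∈ F, |W n - V (n + k)| < ε

/-! ### Auxiliary lemmas -/

open ComplexConjugate

lemma L2Z.norm_rpow (f : L2Z) : ‖f‖ ^ (2:ℝ) = ∑' n, ‖f n‖ ^ (2:ℝ) := by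
  have := lp.norm_rpow_eq_tsum (p := 2) (E := fun _ : ℤ => ℂ) (by norm_num) f
  simpa using this

lemma L2Z.rpow_half (x : ℝ) (hx : 0 ≤ x) : (x ^ (2:ℝ)) ^ ((1:ℝ)/2) = x := by
  rw [← Real.rpow_mul hx]; norm_num

lemma L2Z.norm_le_of_dom (f h : L2Z) (hfh : ∀ n, ‖f n‖ ≤ ‖h n‖) : ‖f‖ ≤ ‖h‖ := by
  have h1 : ‖f‖ ^ (2:ℝ) ≤ ‖h‖ ^ (2:ℝ) := by
    rw [L2Z.norm_rpow, L2Z.norm_rpow]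
    refine Summable.tsum_le_tsum (fun n => ?_) ?_ ?_
    · exact Real.rpow_le_rpow (norm_nonneg _) (hfh n) (by norm_num)
    · simpa using ((lp.memℓp f).summable (by norm_num))
    · simpa using ((lp.memℓp h).summable (by norm_num))
  have h2 := Real.rpow_le_rpow (by positivity) h1 (z := (1:ℝ)/2) (by norm_num)
  rwa [L2Z.rpow_half _ (norm_nonneg _), L2Z.rpow_half _ (norm_nonneg _)] at h2

lemma L2Z.memℓp_shift (k : ℤ) (f : L2Z) : Memℓp (fun n : ℤ => f (n + k)) 2 := by
  apply memℓp_gen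
  have hs := (lp.memℓp f).summable (p := 2) (by norm_num)
  have h2 : Summable ((fun i : ℤ => ‖f i‖ ^ ENNReal.toReal 2) ∘ (Equiv.addRight k)) :=
    (Equiv.addRight k).summable_iff.2 hs
  simpa [Function.comp_def] using h2

def L2Z.shift (k : ℤ) (f : L2Z) : L2Z := ⟨fun n => f (n + k), L2Z.memℓp_shift k f⟩

@[simp] lemma L2Z.shift_apply (k : ℤ) (f : L2Z) (n : ℤ) : (L2Z.shift k f) n = f (n + k) := rfl

lemma L2Z.norm_shift (k : ℤ) (f : L2Z) : ‖L2Z.shift k f‖ = ‖f‖ := by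
  have h1 := L2Z.norm_rpow (L2Z.shift k f)
  have h2 := L2Z.norm_rpow f
  have h3 : ∑' n : ℤ, ‖(L2Z.shift k f) n‖ ^ (2:ℝ) = ∑' n : ℤ, ‖f n‖ ^ (2:ℝ) :=
    (Equiv.addRight k).tsum_eq (fun n => ‖f n‖ ^ (2:ℝ))
  have h4 : ‖L2Z.shift k f‖ ^ (2:ℝ) = ‖f‖ ^ (2:ℝ) := by rw [h1, h2, h3]
  calc ‖L2Z.shift k f‖ = (‖L2Z.shift k f‖ ^ (2:ℝ)) ^ ((1:ℝ)/2) :=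
        (L2Z.rpow_half _ (norm_nonneg _)).symm
    _ = (‖f‖ ^ (2:ℝ)) ^ ((1:ℝ)/2) := by rw [h4]
    _ = ‖f‖ := L2Z.rpow_half _ (norm_nonneg _)

lemma sum_single_apply (s : Finset ℤ) (v : ℤ → ℂ) (k m : ℤ) :
    (↑(∑ j ∈ s, lp.single 2 (j + k) (v j)) : ∀ _ : ℤ, ℂ) m
      = if m - k ∈ s then v (m - k) else 0 := by
  rw [lp.coeFn_sum]
  rw [Finset.sum_apply]
  have h1 : ∀ j ∈ s, (lp.single (E := fun _ : ℤ => ℂ) 2 (j + k) (v j)) m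
      = if j = m - k then v j else 0 := by
    intro j _
    by_cases h : m = j + k
    · subst h
      rw [lp.single_apply_self, if_pos (by omega)]
    · rw [lp.single_apply_ne _ _ _ h, if_neg (by omega)]
  rw [Finset.sum_congr rfl h1, Finset.sum_ite_eq' s (m - k) v]

lemma sq_eq_helper {x c : ℝ} (hx : 0 ≤ x) (hc : 0 ≤ c) (h : x ^ (2:ℝ) = c ^ 2) : x = c := by
  have h2 : x ^ (2:ℕ) = c ^ 2 := by rw [← h, ← Real.rpow_natCast x 2]; norm_num
  rcases lt_trichotomy x c with hlt | heq | hgt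
  · exact absurd h2 (pow_lt_pow_left₀ hlt hx (by norm_num)).ne
  · exact heq
  · exact absurd h2.symm (pow_lt_pow_left₀ hgt hc (by norm_num)).ne

lemma sq_le_helper {x c : ℝ} (hx : 0 ≤ x) (hc : 0 ≤ c) (h : x ^ (2:ℝ) ≤ c ^ 2) : x ≤ c := by
  have hxx : x ^ (2:ℝ) = x ^ (2:ℕ) := by rw [← Real.rpow_natCast x 2]; norm_num
  have h2 : x ^ (2:ℕ) ≤ c ^ 2 := by rw [← hxx]; exact h
  by_contra hlt
  push_neg at hlt
  exact absurd h2 (not_le.2 (pow_lt_pow_left₀ hlt hc (by norm_num)))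

lemma norm_sum_single_shift (s : Finset ℤ) (v : ℤ → ℂ) (k : ℤ) :
    ‖∑ j ∈ s, lp.single (E := fun _ : ℤ => ℂ) 2 (j + k) (v j)‖ ^ (2:ℝ)
      = ∑ j ∈ s, ‖v j‖ ^ 2 := by
  have hemb : Function.Injective (fun j : ℤ => j + k) := fun x y h => by simpa using h
  have h1 : (∑ j ∈ s, lp.single (E := fun _ : ℤ => ℂ) 2 (j + k) (v j))
      = ∑ i ∈ s.map ⟨fun j => j + k, hemb⟩, lp.single 2 i (v (i - k)) := by
    rw [Finset.sum_map]
    refine Finset.sum_congr rfl (fun j _ => ?_)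
    simp only [Function.Embedding.coeFn_mk, add_sub_cancel_right]
  rw [h1]
  have h2 := lp.norm_sum_single (p := 2) (E := fun _ : ℤ => ℂ) (by norm_num)
    (fun i => v (i - k)) (s.map ⟨fun j => j + k, hemb⟩)
  simp only [ENNReal.toReal_ofNat] at h2 ⊢
  rw [h2, Finset.sum_map]
  refine Finset.sum_congr rfl (fun j _ => ?_)
  simp only [Function.Embedding.coeFn_mk, add_sub_cancel_right]
  rw [← Real.rpow_natCast ‖v j‖ 2]; norm_num

lemma norm_first_le {E : Type*} [NormedAddCommGroup E] (x y z : E) :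
    ‖x‖ ≤ ‖x + y + z‖ + ‖y‖ + ‖z‖ := by
  have h1 : ‖x + y‖ ≤ ‖x + y + z‖ + ‖z‖ := norm_le_add_norm_add _ _
  have h2 : ‖x‖ ≤ ‖x + y‖ + ‖y‖ := norm_le_add_norm_add _ _
  linarith

/-- The exact generalized eigenfunction. -/
def uFun (n : ℤ) : ℂ := Complex.I ^ n * (if Even n then 1 else Complex.I)

/-- sign pattern -/
def sFun (n : ℤ) : ℝ := if Even n then 1 else -1

lemma sFun_abs (n : ℤ) : |sFun n| ≤ 1 := by unfold sFun; split <;> norm_num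

lemma uFun_norm (n : ℤ) : ‖uFun n‖ = 1 := by
  unfold uFun
  rw [norm_mul, norm_zpow, Complex.norm_I]
  rcases Int.even_or_odd n with h | h
  · simp [h]
  · rw [if_neg (Int.not_even_iff_odd.2 h)]
    simp

lemma uFun_rec (a b : ℝ) (n : ℤ) :
    (a:ℂ) * uFun (n - 1) + (b:ℂ) * uFun (n + 1) + (((b - a) * sFun n : ℝ) : ℂ) * uFun n = 0 := by
  have hI : (Complex.I : ℂ) ≠ 0 := Complex.I_ne_zero
  have hm : Complex.I ^ (n - 1) = Complex.I ^ n * Complex.I⁻¹ := by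
    rw [zpow_sub₀ hI, zpow_one, div_eq_mul_inv]
  have hp : Complex.I ^ (n + 1) = Complex.I ^ n * Complex.I := by
    rw [zpow_add₀ hI, zpow_one]
  rcases Int.even_or_odd n with h | h
  · have h1 : ¬ Even (n - 1) := by rcases h with ⟨r, hr⟩; intro ⟨t, ht⟩; omega
    have h2 : ¬ Even (n + 1) := by rcases h with ⟨r, hr⟩; intro ⟨t, ht⟩; omega
    unfold uFun sFun
    rw [if_pos h, if_neg h1, if_neg h2, if_pos h, hm, hp]
    push_cast
    rw [Complex.inv_I]
    linear_combination ((b:ℂ) - (a:ℂ)) * Complex.I ^ n * Complex.I_sq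
  · have h1 : Even (n - 1) := by rcases h with ⟨r, hr⟩; exact ⟨r, by omega⟩
    have h2 : Even (n + 1) := by rcases h with ⟨r, hr⟩; exact ⟨r + 1, by omega⟩
    unfold uFun sFun
    rw [if_pos h1, if_pos h2, if_neg (Int.not_even_iff_odd.2 h), if_neg (Int.not_even_iff_odd.2 h),
      hm, hp]
    push_cast
    rw [Complex.inv_I]
    ring

set_option maxHeartbeats 1000000
set_option synthInstance.maxHeartbeats 400000

theorem anderson_inverse_norm
    (g μ : ℝ) (hg : 0 < g) (hμ0 : 0 ≤ μ) (hμ : μ < Real.exp g - Real.exp (-g))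
    (H₀ : L2Z →L[ℂ] L2Z)
    (hH₀ : ∀ (f : L2Z) (n : ℤ),
      (H₀ f) n = Complex.exp (-(g : ℂ)) * f (n - 1) + Complex.exp (g : ℂ) * f (n + 1))
    (V : ℤ → ℝ) (hV : IsPseudoErgodicZ μ V)
    (MV : L2Z →L[ℂ] L2Z)
    (hMV : ∀ (f : L2Z) (n : ℤ), (MV f) n = (V n : ℂ) * f n) :
    IsUnit (H₀ + MV) ∧
    ‖Ring.inverse (H₀ + MV)‖⁻¹ = Real.exp g - Real.exp (-g) - μ := by
  set a := Real.exp (-g) with ha_def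
  set b := Real.exp g with hb_def
  have ha : 0 < a := Real.exp_pos _
  have hb : 0 < b := Real.exp_pos _
  set d : ℝ := b - a - μ with hd_def
  have hd : 0 < d := by simp only [hd_def]; linarith
  set A := H₀ + MV with hA_def
  -- cast facts
  have hca : (Complex.exp (-(g:ℂ))) = ((a:ℝ) : ℂ) := by
    rw [ha_def, Complex.ofReal_exp]; push_cast; ring_nf
  have hcb : (Complex.exp ((g:ℂ))) = ((b:ℝ) : ℂ) := by
    rw [hb_def, Complex.ofReal_exp]
  -- pointwise formula for A
  have hA_apply : ∀ (f : L2Z) (m : ℤ),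
      (A f) m = (a:ℂ) * f (m - 1) + (b:ℂ) * f (m + 1) + (V m : ℂ) * f m := by
    intro f m
    have : (A f) m = (H₀ f) m + (MV f) m := by
      rw [hA_def, ContinuousLinearMap.add_apply, lp.coeFn_add, Pi.add_apply]
    rw [this, hH₀ f m, hMV f m, hca, hcb]
  -- H₀ as sum of shifts
  have hH₀' : ∀ f : L2Z, H₀ f = (a:ℂ) • L2Z.shift (-1) f + (b:ℂ) • L2Z.shift 1 f := by
    intro f
    apply lp.ext
    funext n
    rw [lp.coeFn_add, Pi.add_apply, lp.coeFn_smul, lp.coeFn_smul, Pi.smul_apply, Pi.smul_apply,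
      hH₀ f n, hca, hcb, L2Z.shift_apply, L2Z.shift_apply]
    have e1 : n + -1 = n - 1 := by omega
    rw [e1]
    simp [smul_eq_mul]
  -- ‖MV f‖ ≤ μ ‖f‖
  have hMV_norm : ∀ f : L2Z, ‖MV f‖ ≤ μ * ‖f‖ := by
    intro f
    have h1 : ‖MV f‖ ≤ ‖(μ:ℂ) • f‖ := by
      apply L2Z.norm_le_of_dom
      intro n
      rw [hMV f n, lp.coeFn_smul, Pi.smul_apply, smul_eq_mul]
      rw [norm_mul, norm_mul, Complex.norm_real, Complex.norm_real, Real.norm_eq_abs,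
        Real.norm_eq_abs, abs_of_nonneg hμ0]
      have := (hV.1 n)
      have habs : |V n| ≤ μ := abs_le.2 ⟨this.1, this.2⟩
      exact mul_le_mul_of_nonneg_right habs (norm_nonneg _)
    calc ‖MV f‖ ≤ ‖(μ:ℂ) • f‖ := h1
      _ = μ * ‖f‖ := by
          rw [norm_smul, Complex.norm_real, Real.norm_eq_abs, abs_of_nonneg hμ0]
  -- lower bound for H₀
  have hH₀_low : ∀ f : L2Z, (b - a) * ‖f‖ ≤ ‖H₀ f‖ := by
    intro f
    rw [hH₀' f]
    set x := (a:ℂ) • L2Z.shift (-1) f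
    set y := (b:ℂ) • L2Z.shift 1 f
    have hx : ‖x‖ = a * ‖f‖ := by
      rw [norm_smul, Complex.norm_real, Real.norm_eq_abs, abs_of_pos ha, L2Z.norm_shift]
    have hy : ‖y‖ = b * ‖f‖ := by
      rw [norm_smul, Complex.norm_real, Real.norm_eq_abs, abs_of_pos hb, L2Z.norm_shift]
    have h1 : ‖y‖ ≤ ‖x + y‖ + ‖x‖ := norm_le_add_norm_add' x y
    have h2 : (b - a) * ‖f‖ = ‖y‖ - ‖x‖ := by rw [hx, hy]; ring
    linarith
  -- lower bound for A
  have hlow : ∀ f : L2Z, d * ‖f‖ ≤ ‖A f‖ := by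
    intro f
    have h0 : A f = H₀ f + MV f := by rw [hA_def]; rfl
    have h1 : ‖H₀ f‖ ≤ ‖A f‖ + ‖MV f‖ := by
      rw [h0]
      exact norm_le_add_norm_add _ _
    have h2 := hH₀_low f
    have h3 := hMV_norm f
    have : d * ‖f‖ = (b - a) * ‖f‖ - μ * ‖f‖ := by rw [hd_def]; ring
    linarith
  -- antilipschitz
  have hbound : ∀ f : L2Z, ‖f‖ ≤ (d⁻¹).toNNReal * ‖A f‖ := by
    intro f
    rw [Real.coe_toNNReal _ (le_of_lt (inv_pos.2 hd))]
    calc ‖f‖ = d⁻¹ * (d * ‖f‖) := by field_simp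
      _ ≤ d⁻¹ * ‖A f‖ := mul_le_mul_of_nonneg_left (hlow f) (inv_pos.2 hd).le
  have hanti : AntilipschitzWith (d⁻¹).toNNReal A :=
    ContinuousLinearMap.antilipschitz_of_bound A hbound
  -- injectivity
  have hker : LinearMap.ker (A : L2Z →ₗ[ℂ] L2Z) = ⊥ := by
    rw [LinearMap.ker_eq_bot]; exact hanti.injective
  -- the "transpose kills" step
  have htrans : ∀ y : L2Z, (∀ x : L2Z, (inner ℂ (A x) y : ℂ) = 0) → y = 0 := by
    intro y hy
    -- coordinate identity
    have hcoord : ∀ n : ℤ, (b:ℂ) * y (n - 1) + (V n : ℂ) * y n + (a:ℂ) * y (n + 1) = 0 := by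
      intro n
      have hx : ∀ m : ℤ, (lp.single (E := fun _ : ℤ => ℂ) 2 n (1:ℂ)) m
          = if m = n then 1 else 0 := by
        intro m
        by_cases h : m = n
        · subst h; rw [lp.single_apply_self, if_pos rfl]
        · rw [lp.single_apply_ne _ _ _ h, if_neg h]
      set x : L2Z := lp.single 2 n (1:ℂ) with hxdef
      have hinner := lp.inner_eq_tsum (𝕜 := ℂ) (A x) y
      have hterm : ∀ m : ℤ, (inner ℂ ((A x) m) (y m) : ℂ)
          = conj ((A x) m) * y m := fun m => RCLike.inner_apply' _ _
      have hAx : ∀ m : ℤ, (A x) m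
          = (a:ℂ) * (if m - 1 = n then 1 else 0) + (b:ℂ) * (if m + 1 = n then 1 else 0)
            + (V m : ℂ) * (if m = n then 1 else 0) := by
        intro m
        rw [hA_apply x m, hx, hx, hx]
      have hsupp : ∀ m : ℤ, m ∉ ({n - 1, n, n + 1} : Finset ℤ) →
          conj ((A x) m) * y m = 0 := by
        intro m hm
        simp only [Finset.mem_insert, Finset.mem_singleton] at hm
        push_neg at hm
        rw [hAx m, if_neg (by omega), if_neg (by omega), if_neg (by omega)]
        simp
      have htsum : (inner ℂ (A x) y : ℂ) = ∑ m ∈ ({n - 1, n, n + 1} : Finset ℤ),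
          conj ((A x) m) * y m := by
        rw [hinner]
        rw [tsum_congr hterm]  -- make the function syntactically the conj form
        exact tsum_eq_sum hsupp
      have hsum : ∑ m ∈ ({n - 1, n, n + 1} : Finset ℤ), conj ((A x) m) * y m
          = (b:ℂ) * y (n - 1) + (V n : ℂ) * y n + (a:ℂ) * y (n + 1) := by
        have c1 : conj ((A x) (n - 1)) * y (n - 1) = (b:ℂ) * y (n - 1) := by
          rw [hAx (n-1), if_neg (show ¬(n - 1 - 1 = n) by omega),
            if_pos (show n - 1 + 1 = n by omega), if_neg (show ¬(n - 1 = n) by omega)]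
          simp [Complex.conj_ofReal]
        have c2 : conj ((A x) n) * y n = (V n : ℂ) * y n := by
          rw [hAx n, if_neg (show ¬(n - 1 = n) by omega),
            if_neg (show ¬(n + 1 = n) by omega), if_pos rfl]
          simp [Complex.conj_ofReal]
        have c3 : conj ((A x) (n + 1)) * y (n + 1) = (a:ℂ) * y (n + 1) := by
          rw [hAx (n+1), if_pos (show n + 1 - 1 = n by omega),
            if_neg (show ¬(n + 1 + 1 = n) by omega), if_neg (show ¬(n + 1 = n) by omega)]
          simp [Complex.conj_ofReal]
        rw [Finset.sum_insert (by simp only [Finset.mem_insert, Finset.mem_singleton]; omega),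
          Finset.sum_insert (by simp only [Finset.mem_singleton]; omega),
          Finset.sum_singleton, c1, c2, c3]
        ring
      have := hy x
      rw [htsum, hsum] at this
      exact this
    -- build the vector z and bound its norm from below
    set z : L2Z := (b:ℂ) • L2Z.shift (-1) y + MV y + (a:ℂ) • L2Z.shift 1 y with hzdef
    have hz0 : z = 0 := by
      apply lp.ext
      funext m
      have : (z : ∀ _ : ℤ, ℂ) m = (b:ℂ) * y (m - 1) + (V m : ℂ) * y m + (a:ℂ) * y (m + 1) := by
        rw [hzdef]
        rw [lp.coeFn_add, lp.coeFn_add, Pi.add_apply, Pi.add_apply, lp.coeFn_smul,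
          lp.coeFn_smul, Pi.smul_apply, Pi.smul_apply, hMV y m, L2Z.shift_apply,
          L2Z.shift_apply]
        have e1 : m + -1 = m - 1 := by omega
        rw [e1]
        simp [smul_eq_mul]
      rw [this, hcoord m]
      rfl
    have hznorm : d * ‖y‖ ≤ ‖z‖ := by
      set x1 := (b:ℂ) • L2Z.shift (-1) y
      set x2 := MV y
      set x3 := (a:ℂ) • L2Z.shift 1 y
      have hx1 : ‖x1‖ = b * ‖y‖ := by
        rw [norm_smul, Complex.norm_real, Real.norm_eq_abs, abs_of_pos hb, L2Z.norm_shift]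
      have hx3 : ‖x3‖ = a * ‖y‖ := by
        rw [norm_smul, Complex.norm_real, Real.norm_eq_abs, abs_of_pos ha, L2Z.norm_shift]
      have hx2 : ‖x2‖ ≤ μ * ‖y‖ := hMV_norm y
      have h1 : ‖x1‖ ≤ ‖x1 + x2 + x3‖ + ‖x2‖ + ‖x3‖ := norm_first_le x1 x2 x3
      have h2 : z = x1 + x2 + x3 := hzdef
      rw [← h2] at h1
      have : d * ‖y‖ = b * ‖y‖ - μ * ‖y‖ - a * ‖y‖ := by rw [hd_def]; ring
      linarith
    rw [hz0, norm_zero] at hznorm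
    have hy0 : ‖y‖ ≤ 0 := by nlinarith
    have := norm_nonneg y
    have : ‖y‖ = 0 := le_antisymm hy0 this
    exact norm_eq_zero.1 this
  -- surjectivity
  have hclosed : IsClosed (Set.range A) := hanti.isClosed_range A.uniformContinuous
  have hrange : LinearMap.range (A : L2Z →ₗ[ℂ] L2Z) = ⊤ := by
    have hclosed2 : IsClosed ((LinearMap.range (A : L2Z →ₗ[ℂ] L2Z) : Submodule ℂ L2Z) : Set L2Z) := by
      have hset : ((LinearMap.range (A : L2Z →ₗ[ℂ] L2Z) : Submodule ℂ L2Z) : Set L2Z) = Set.range A := by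
        ext v; simp [LinearMap.mem_range]
      rw [hset]; exact hclosed
    haveI := hclosed2.completeSpace_coe
    rw [← (LinearMap.range (A : L2Z →ₗ[ℂ] L2Z)).orthogonal_orthogonal]
    rw [Submodule.eq_top_iff']
    intro v
    rw [Submodule.mem_orthogonal]
    intro w hw
    have hw0 : w = 0 := by
      apply htrans w
      intro x
      exact hw (A x) (LinearMap.mem_range.2 ⟨x, rfl⟩)
    rw [hw0]
    exact inner_zero_left _
  set e : L2Z ≃L[ℂ] L2Z := ContinuousLinearEquiv.ofBijective A hker hrange with he_def
  have he : ∀ x, e x = A x := fun x => rfl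
  have hAe : ∀ x, A (e.symm x) = x := fun x => by rw [← he (e.symm x), e.apply_symm_apply]
  set Binv : L2Z →L[ℂ] L2Z := (e.symm : L2Z →L[ℂ] L2Z) with hBinv_def
  have hBinv_apply : ∀ x, Binv x = e.symm x := fun x => rfl
  have hval_inv : A * Binv = 1 := by
    apply ContinuousLinearMap.ext
    intro x
    simp only [ContinuousLinearMap.mul_apply, ContinuousLinearMap.one_apply]
    rw [hBinv_apply, hAe]
  have hinv_val : Binv * A = 1 := by
    apply ContinuousLinearMap.ext
    intro x
    simp only [ContinuousLinearMap.mul_apply, ContinuousLinearMap.one_apply]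
    rw [hBinv_apply, ← he x, e.symm_apply_apply]
  set u : (L2Z →L[ℂ] L2Z)ˣ := ⟨A, Binv, hval_inv, hinv_val⟩ with hu_def
  have hunit : IsUnit A := ⟨u, rfl⟩
  have hRinv : Ring.inverse A = Binv := by
    rw [show A = (u : L2Z →L[ℂ] L2Z) from rfl, Ring.inverse_unit]
    rfl
  -- upper bound on the norm of the inverse
  set M : ℝ := ‖Binv‖ with hM_def
  have hMub : M ≤ d⁻¹ := by
    rw [hM_def]
    refine ContinuousLinearMap.opNorm_le_bound _ (inv_nonneg.2 hd.le) (fun x => ?_)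
    have h := hlow (e.symm x)
    rw [hAe x] at h
    rw [hBinv_apply]
    calc ‖e.symm x‖ = d⁻¹ * (d * ‖e.symm x‖) := by field_simp
      _ ≤ d⁻¹ * ‖x‖ := mul_le_mul_of_nonneg_left h (inv_nonneg.2 hd.le)
  -- quasimodes
  have hquasi : ∀ ε : ℝ, 0 < ε → ∃ ψ : L2Z, ψ ≠ 0 ∧ ‖A ψ‖ ≤ (d + ε) * ‖ψ‖ := by
    intro ε hε
    obtain ⟨N₀, hN₀⟩ := exists_nat_ge ((8 * b / ε) ^ 2)
    set N : ℕ := N₀ + 1 with hN_def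
    set r : ℝ := Real.sqrt (2 * N + 1) with hr_def
    have hrsq : r ^ 2 = 2 * N + 1 := Real.sq_sqrt (by positivity)
    have hr0 : 0 < r := Real.sqrt_pos.2 (by positivity)
    have hrb : 8 * b / ε ≤ r := by
      by_contra hcon
      push_neg at hcon
      have h1 : r ^ 2 < (8 * b / ε) ^ 2 :=
        pow_lt_pow_left₀ hcon hr0.le (by norm_num)
      have h2 : ((N₀ : ℝ)) ≤ 2 * N + 1 := by rw [hN_def]; push_cast; linarith
      rw [hrsq] at h1
      linarith
    have h4b : 4 * b ≤ ε / 2 * r := by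
      have h8 : 8 * b ≤ r * ε := (div_le_iff₀ hε).1 hrb
      nlinarith
    set F : Finset ℤ := Finset.Icc (-(N:ℤ)) N with hF_def
    have hcardF : (F.card : ℝ) = 2 * N + 1 := by
      rw [hF_def, Int.card_Icc]
      have h1 : ((N:ℤ) + 1 - -(N:ℤ)).toNat = 2 * N + 1 := by omega
      rw [h1]; push_cast; ring
    set W : ℤ → ℝ := fun n => μ * sFun n with hW_def
    have hWmem : ∀ n ∈ F, W n ∈ Set.Icc (-μ) μ := by
      intro n _
      rw [hW_def]
      simp only [Set.mem_Icc]
      unfold sFun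
      split <;> constructor <;> linarith
    obtain ⟨k, hk⟩ := hV.2 (ε/2) (half_pos hε) F W hWmem
    set ψ : L2Z := ∑ j ∈ F, lp.single 2 (j + k) (uFun j) with hψ_def
    have hψc : ∀ m : ℤ, (ψ : ∀ _ : ℤ, ℂ) m = if m - k ∈ F then uFun (m - k) else 0 := by
      intro m; rw [hψ_def]; exact sum_single_apply F uFun k m
    have hψ_norm : ‖ψ‖ = r := by
      apply sq_eq_helper (norm_nonneg _) hr0.le
      rw [hψ_def, norm_sum_single_shift, hrsq]
      have h1 : ∀ j ∈ F, ‖uFun j‖ ^ 2 = 1 := fun j _ => by rw [uFun_norm]; norm_num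
      rw [Finset.sum_congr rfl h1, Finset.sum_const, nsmul_eq_mul, mul_one, hcardF]
    set cD : ℤ → ℂ := fun j => (((μ - (b - a)) * sFun j : ℝ) : ℂ) * uFun j with hcD_def
    set D : L2Z := ∑ j ∈ F, lp.single 2 (j + k) (cD j) with hD_def
    have hDc : ∀ m : ℤ, (D : ∀ _ : ℤ, ℂ) m = if m - k ∈ F then cD (m - k) else 0 := by
      intro m; rw [hD_def]; exact sum_single_apply F cD k m
    have hcD_norm : ∀ j : ℤ, ‖cD j‖ = d := by
      intro j
      rw [hcD_def]
      simp only []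
      rw [norm_mul, uFun_norm, mul_one, Complex.norm_real, Real.norm_eq_abs, abs_mul]
      have h1 : |μ - (b - a)| = d := by
        have hd' : 0 < b - a - μ := by rw [hd_def] at hd; exact hd
        rw [abs_of_neg (by linarith : μ - (b - a) < 0), hd_def]; ring
      have h2 : |sFun j| = 1 := by unfold sFun; split <;> norm_num
      rw [h1, h2, mul_one]
    have hD_norm : ‖D‖ = d * r := by
      apply sq_eq_helper (norm_nonneg _) (by positivity)
      rw [hD_def, norm_sum_single_shift]
      have h1 : ∀ j ∈ F, ‖cD j‖ ^ 2 = d ^ 2 := fun j _ => by rw [hcD_norm]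
      rw [Finset.sum_congr rfl h1, Finset.sum_const, nsmul_eq_mul, hcardF]
      rw [mul_pow, hrsq]
      ring
    set cE : ℤ → ℂ := fun j => (((V (j + k) - μ * sFun j : ℝ)) : ℂ) * uFun j with hcE_def
    set Er : L2Z := ∑ j ∈ F, lp.single 2 (j + k) (cE j) with hE_def
    have hEc : ∀ m : ℤ, (Er : ∀ _ : ℤ, ℂ) m = if m - k ∈ F then cE (m - k) else 0 := by
      intro m; rw [hE_def]; exact sum_single_apply F cE k m
    have hcE_norm : ∀ j ∈ F, ‖cE j‖ ≤ ε / 2 := by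
      intro j hj
      have h1 := hk j hj
      rw [hW_def] at h1
      rw [hcE_def]
      simp only []
      rw [norm_mul, uFun_norm, mul_one, Complex.norm_real, Real.norm_eq_abs]
      rw [abs_sub_comm] at h1
      exact le_of_lt h1
    have hE_norm : ‖Er‖ ≤ ε / 2 * r := by
      apply sq_le_helper (norm_nonneg _) (by positivity)
      rw [hE_def, norm_sum_single_shift]
      have h1 : ∀ j ∈ F, ‖cE j‖ ^ 2 ≤ (ε/2) ^ 2 := fun j hj => by
        have := hcE_norm j hj
        nlinarith [norm_nonneg (cE j)]
      calc ∑ j ∈ F, ‖cE j‖ ^ 2 ≤ ∑ _j ∈ F, (ε/2) ^ 2 := Finset.sum_le_sum h1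
        _ = (F.card : ℝ) * (ε/2) ^ 2 := by rw [Finset.sum_const, nsmul_eq_mul]
        _ = (ε / 2 * r) ^ 2 := by rw [hcardF, mul_pow, hrsq]; ring
    set J : Finset ℤ := Finset.Icc (-(N:ℤ) - 1) ((N:ℤ) + 1) \
      Finset.Icc (-(N:ℤ) + 1) ((N:ℤ) - 1) with hJ_def
    set B : L2Z := A ψ - D - Er with hB_def
    set B' : L2Z := ∑ j ∈ J, lp.single 2 (j + k) (((2 * b : ℝ)) : ℂ) with hB'_def
    have hB'c : ∀ m : ℤ, (B' : ∀ _ : ℤ, ℂ) m = if m - k ∈ J then (((2 * b : ℝ)) : ℂ) else 0 := by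
      intro m; rw [hB'_def]; exact sum_single_apply J (fun _ => (((2 * b : ℝ)) : ℂ)) k m
    have hBm : ∀ m : ℤ, (B : ∀ _ : ℤ, ℂ) m
        = (a:ℂ) * (if m - k - 1 ∈ F then uFun (m - k - 1) else 0)
          + (b:ℂ) * (if m - k + 1 ∈ F then uFun (m - k + 1) else 0)
          + (((b - a) * sFun (m - k) : ℝ) : ℂ) * (if m - k ∈ F then uFun (m - k) else 0) := by
      intro m
      have h0 : (B : ∀ _ : ℤ, ℂ) m = (A ψ) m - D m - Er m := by
        rw [hB_def, lp.coeFn_sub, Pi.sub_apply, lp.coeFn_sub, Pi.sub_apply]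
      rw [h0, hA_apply ψ m, hψc (m-1), hψc (m+1), hψc m, hDc m, hEc m]
      have e1 : m - 1 - k = m - k - 1 := by omega
      have e2 : m + 1 - k = m - k + 1 := by omega
      rw [e1, e2]
      by_cases hj : m - k ∈ F
      · rw [if_pos hj, if_pos hj, if_pos hj]
        simp only [hcD_def, hcE_def]
        have e3 : m - k + k = m := by omega
        rw [e3]
        push_cast
        ring
      · rw [if_neg hj, if_neg hj, if_neg hj]
        ring
    have hdom : ∀ m : ℤ, ‖(B : ∀ _ : ℤ, ℂ) m‖ ≤ ‖(B' : ∀ _ : ℤ, ℂ) m‖ := by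
      intro m
      rw [hBm m, hB'c m]
      by_cases hint : m - k ∈ Finset.Icc (-(N:ℤ) + 1) ((N:ℤ) - 1)
      · rw [Finset.mem_Icc] at hint
        have h1 : m - k - 1 ∈ F := by rw [hF_def, Finset.mem_Icc]; omega
        have h2 : m - k + 1 ∈ F := by rw [hF_def, Finset.mem_Icc]; omega
        have h3 : m - k ∈ F := by rw [hF_def, Finset.mem_Icc]; omega
        rw [if_pos h1, if_pos h2, if_pos h3, uFun_rec a b (m - k), norm_zero]
        exact norm_nonneg _
      · by_cases hout : m - k ∈ Finset.Icc (-(N:ℤ) - 1) ((N:ℤ) + 1)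
        · have hJm : m - k ∈ J := by rw [hJ_def]; exact Finset.mem_sdiff.2 ⟨hout, hint⟩
          rw [if_pos hJm]
          have n1 : ‖(a:ℂ) * (if m - k - 1 ∈ F then uFun (m - k - 1) else 0)‖ ≤ a := by
            rw [norm_mul, Complex.norm_real, Real.norm_eq_abs, abs_of_pos ha]
            split
            · rw [uFun_norm]; simp
            · simp [ha.le]
          have n2 : ‖(b:ℂ) * (if m - k + 1 ∈ F then uFun (m - k + 1) else 0)‖ ≤ b := by
            rw [norm_mul, Complex.norm_real, Real.norm_eq_abs, abs_of_pos hb]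
            split
            · rw [uFun_norm]; simp
            · simp [hb.le]
          have n3 : ‖(((b - a) * sFun (m - k) : ℝ) : ℂ)
              * (if m - k ∈ F then uFun (m - k) else 0)‖ ≤ b - a := by
            rw [norm_mul, Complex.norm_real, Real.norm_eq_abs, abs_mul]
            have hs : |sFun (m - k)| ≤ 1 := sFun_abs _
            have hba : |b - a| = b - a := abs_of_pos (by linarith)
            have hn : ‖(if m - k ∈ F then uFun (m - k) else 0)‖ ≤ 1 := by
              split
              · rw [uFun_norm]
              · simp
            calc |b - a| * |sFun (m - k)| * ‖(if m - k ∈ F then uFun (m - k) else 0)‖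
                ≤ |b - a| * 1 * 1 := by
                  apply mul_le_mul (mul_le_mul le_rfl hs (abs_nonneg _) (abs_nonneg _)) hn
                    (norm_nonneg _) (by positivity)
              _ = b - a := by rw [hba]; ring
          have htri := norm_add₃_le (a := (a:ℂ) * (if m - k - 1 ∈ F then uFun (m - k - 1) else 0))
            (b := (b:ℂ) * (if m - k + 1 ∈ F then uFun (m - k + 1) else 0))
            (c := (((b - a) * sFun (m - k) : ℝ) : ℂ) * (if m - k ∈ F then uFun (m - k) else 0))
          have hrhs : ‖(((2 * b : ℝ)) : ℂ)‖ = 2 * b := by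
            rw [Complex.norm_real, Real.norm_eq_abs, abs_of_pos (by linarith)]
          rw [hrhs]
          linarith
        · rw [Finset.mem_Icc, not_and_or, not_le, not_le] at hout
          have h1 : m - k - 1 ∉ F := by rw [hF_def, Finset.mem_Icc]; omega
          have h2 : m - k + 1 ∉ F := by rw [hF_def, Finset.mem_Icc]; omega
          have h3 : m - k ∉ F := by rw [hF_def, Finset.mem_Icc]; omega
          have h4 : m - k ∉ J := by
            rw [hJ_def]
            intro hc
            have := (Finset.mem_sdiff.1 hc).1
            rw [Finset.mem_Icc] at this
            omega
          rw [if_neg h1, if_neg h2, if_neg h3, if_neg h4]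
          simp
    have hBnorm : ‖B‖ ≤ 4 * b := by
      have h1 : ‖B‖ ≤ ‖B'‖ := L2Z.norm_le_of_dom B B' hdom
      have hJcard : J.card = 4 := by
        rw [hJ_def, Finset.card_sdiff_of_subset (Finset.Icc_subset_Icc (by omega) (by omega)),
          Int.card_Icc, Int.card_Icc]
        omega
      have h2 : ‖B'‖ = 4 * b := by
        apply sq_eq_helper (norm_nonneg _) (by positivity)
        rw [hB'_def, norm_sum_single_shift]
        have h3 : ∀ j ∈ J, ‖(((2 * b : ℝ)) : ℂ)‖ ^ 2 = (2 * b) ^ 2 := by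
          intro j _
          rw [Complex.norm_real, Real.norm_eq_abs, abs_of_pos (by linarith)]
        rw [Finset.sum_congr rfl h3, Finset.sum_const, nsmul_eq_mul, hJcard]
        push_cast
        ring
      linarith
    refine ⟨ψ, ?_, ?_⟩
    · intro h0
      rw [h0, norm_zero] at hψ_norm
      exact hr0.ne' hψ_norm.symm
    · have hAD : A ψ = D + Er + B := by rw [hB_def]; abel
      calc ‖A ψ‖ = ‖D + Er + B‖ := by rw [hAD]
        _ ≤ ‖D‖ + ‖Er‖ + ‖B‖ := norm_add₃_le
        _ ≤ d * r + ε / 2 * r + 4 * b :=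
            add_le_add (add_le_add hD_norm.le hE_norm) hBnorm
        _ ≤ d * r + ε / 2 * r + ε / 2 * r := by linarith
        _ = (d + ε) * r := by ring
        _ = (d + ε) * ‖ψ‖ := by rw [hψ_norm]
  -- lower bound on the norm of the inverse
  have hMlb : ∀ ε : ℝ, 0 < ε → (d + ε)⁻¹ ≤ M := by
    intro ε hε
    obtain ⟨ψ, hψ0, hψle⟩ := hquasi ε hε
    have hψpos : 0 < ‖ψ‖ := norm_pos_iff.2 hψ0
    have hde : 0 < d + ε := by linarith
    have h1 : ‖ψ‖ ≤ M * ‖A ψ‖ := by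
      have h2 : ψ = Binv (A ψ) := by
        rw [hBinv_apply, ← he ψ, e.symm_apply_apply]
      calc ‖ψ‖ = ‖Binv (A ψ)‖ := by rw [← h2]
        _ ≤ M * ‖A ψ‖ := ContinuousLinearMap.le_opNorm _ _
    have h3 : ‖ψ‖ ≤ M * ((d + ε) * ‖ψ‖) := by
      calc ‖ψ‖ ≤ M * ‖A ψ‖ := h1
        _ ≤ M * ((d + ε) * ‖ψ‖) := by
            apply mul_le_mul_of_nonneg_left hψle
            rw [hM_def]; exact norm_nonneg _
    have h4 : 1 ≤ M * (d + ε) := by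
      have h5 : 1 * ‖ψ‖ ≤ M * (d + ε) * ‖ψ‖ := by
        calc 1 * ‖ψ‖ = ‖ψ‖ := by ring
          _ ≤ M * ((d + ε) * ‖ψ‖) := h3
          _ = M * (d + ε) * ‖ψ‖ := by ring
      exact le_of_mul_le_mul_right h5 hψpos
    calc (d + ε)⁻¹ = (d + ε)⁻¹ * 1 := by ring
      _ ≤ (d + ε)⁻¹ * (M * (d + ε)) := mul_le_mul_of_nonneg_left h4 (by positivity)
      _ = M := by field_simp
  -- conclude
  have hMpos : 0 < M := lt_of_lt_of_le (by positivity) (hMlb 1 one_pos)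
  have hfinal : M⁻¹ = d := by
    apply le_antisymm
    · apply le_of_forall_pos_le_add
      intro ε hε
      have h1 := hMlb ε hε
      have hde : 0 < d + ε := by linarith
      calc M⁻¹ ≤ ((d + ε)⁻¹)⁻¹ := by
            apply inv_anti₀ (by positivity) h1
        _ = d + ε := inv_inv _
    · calc d = (d⁻¹)⁻¹ := (inv_inv d).symm
        _ ≤ M⁻¹ := inv_anti₀ hMpos hMub
  constructor
  · exact hunit
  · rw [hRinv, ← hM_def]
    exact hfinal
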